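/- If the period τ is odd, then N is a sum of two squares; more precisely N = Q_{(τ+1)/2}² + P_{(τ+1)/2}². -/

import Mathlib

/-!
For `m ≥ 1` the complete quotients `ξ m = (P m + √N) / Q m` are reduced quadratic irrationals.
Hence they lie in `(1, 2√N)`, and `P m` lies in `(√N - Q m, √N)`, where an integer is
determined by its residue modulo `Q m`; this lets the recursions be run backwards.
From `ξ m = a m + 1 / ξ (m + 1)`, the difference `ξ (m + τ) - ξ m` is multiplied by
`ξ (m + 1) ξ (m + τ + 1) ≥ 1 + 1 / (2√N)` at each step while staying bounded, so it vanishes: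
`(P, Q)` is `τ`-periodic and therefore `Q τ = 1`. Walking the recursions back down from `τ`
gives the palindrome `Q (τ - j) = Q j`, `P (τ - j) = P (j + 1)`; for `τ = 2k + 1` this says
`Q (k + 1) = Q k`, and `N = Q (k + 1) Q k + P (k + 1)²`.
-/

open Real

lemma one_lt_sqrt_of_not_isSquare {N : ℕ} (hN : ¬ IsSquare N) : 1 < √(N : ℝ) := by
  have h2 : 2 ≤ N := by
    by_contra! h
    interval_cases N
    exacts [hN ⟨0, rfl⟩, hN ⟨1, rfl⟩]
  rw [lt_sqrt zero_le_one, one_pow]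
  exact_mod_cast h2

lemma Int.eq_of_dvd_sub_of_mem_Ioo {s : ℝ} {q x y : ℤ} (hxy : q ∣ x - y)
    (hx : (x : ℝ) ∈ Set.Ioo (s - q) s) (hy : (y : ℝ) ∈ Set.Ioo (s - q) s) : x = y := by
  have hlt : |x - y| < q := by
    rw [abs_lt]
    constructor <;> (rify; linarith [hx.1, hx.2, hy.1, hy.2])
  exact sub_eq_zero.mp (Int.eq_zero_of_abs_lt_dvd hxy hlt)

lemma Irrational.eq_of_add_div_eq_add_div {s : ℝ} (hs : Irrational s) {p q p' q' : ℤ}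
    (hq : q ≠ 0) (hq' : q' ≠ 0) (h : (p + s) / q = (p' + s) / q') : p = p' ∧ q = q' := by
  have hcross : ((p * q' - p' * q : ℤ) : ℝ) = s * (q - q' : ℤ) := by
    rw [div_eq_div_iff (by exact_mod_cast hq) (by exact_mod_cast hq')] at h
    push_cast
    linear_combination h
  have hqq : q = q' := by
    by_contra hne
    exact (hs.mul_intCast (sub_ne_zero.mpr hne)).ne_int _ hcross.symm
  subst hqq
  refine ⟨?_, rfl⟩
  rw [div_left_inj' (by exact_mod_cast hq), add_left_inj] at h
  exact_mod_cast h

lemma eq_zero_of_mul_abs_le_abs_succ {d : ℕ → ℝ} {c B : ℝ} (hc : 1 < c)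
    (hgrow : ∀ t, c * |d t| ≤ |d (t + 1)|) (hB : ∀ t, |d t| ≤ B) : d 0 = 0 := by
  have hpow : ∀ t, c ^ t * |d 0| ≤ |d t| := by
    intro t
    induction t with
    | zero => simp
    | succ t ih =>
      calc c ^ (t + 1) * |d 0| = c * (c ^ t * |d 0|) := by ring
        _ ≤ c * |d t| := by gcongr
        _ ≤ |d (t + 1)| := hgrow t
  by_contra hd
  have hd : 0 < |d 0| := abs_pos.mpr hd
  obtain ⟨t, ht⟩ := pow_unbounded_of_one_lt (B / |d 0|) hc
  rw [div_lt_iff₀ hd] at ht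
  linarith [hpow t, hB t]

/-- The quadratic irrational `(p + √N) / q` is reduced: it exceeds `1` and its conjugate
`(p - √N) / q` lies in `(-1, 0)`. -/
def IsReducedSurd (N : ℕ) (p q : ℤ) : Prop :=
  0 < q ∧ (p : ℝ) < √N ∧ √N < p + q ∧ (q : ℝ) < p + √N

structure IsSqrtCF (N : ℕ) (a P Q : ℤ → ℤ) : Prop where
  P_zero : P 0 = 0
  Q_zero : Q 0 = 1
  a_eq : ∀ m : ℤ, 0 ≤ m → a m = ⌊((P m : ℝ) + √N) / Q m⌋
  P_succ : ∀ m : ℤ, 0 ≤ m → P (m + 1) = a m * Q m - P m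
  Q_succ_mul : ∀ m : ℤ, 0 ≤ m → Q (m + 1) * Q m = N - P (m + 1) ^ 2

noncomputable def completeQuotient (N : ℕ) (P Q : ℤ → ℤ) (m : ℤ) : ℝ :=
  (P m + √N) / Q m

namespace IsSqrtCF

variable {N : ℕ} {a P Q : ℤ → ℤ} {m : ℤ}

lemma P_succ_mem_Ioo (h : IsSqrtCF N a P Q) (hN : ¬ IsSquare N) (hm : 0 ≤ m) (hQ : 0 < Q m) :
    (P (m + 1) : ℝ) ∈ Set.Ioo (√N - Q m) √N := by
  have hQR : (0 : ℝ) < Q m := by exact_mod_cast hQ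
  have hirr : Irrational (((P m : ℝ) + √N) / Q m) :=
    ((irrational_sqrt_natCast_iff.mpr hN).intCast_add _).div_intCast hQ.ne'
  have hfloor := h.a_eq m hm
  have hlo : (a m : ℝ) < (P m + √N) / Q m :=
    (hfloor ▸ Int.floor_le _).lt_of_ne fun he => hirr.ne_int _ (hfloor ▸ he).symm
  have hhi : (P m + √N) / Q m < a m + 1 := hfloor ▸ Int.lt_floor_add_one _
  rw [lt_div_iff₀ hQR] at hlo
  rw [div_lt_iff₀ hQR] at hhi
  have hP : (P (m + 1) : ℝ) = a m * Q m - P m := by exact_mod_cast h.P_succ m hm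
  constructor <;> linarith

lemma Q_succ_mul_eq_sqrt_sub_mul_sqrt_add (h : IsSqrtCF N a P Q) (hm : 0 ≤ m) :
    (Q (m + 1) : ℝ) * Q m = (√N - P (m + 1)) * (√N + P (m + 1)) := by
  have := h.Q_succ_mul m hm
  have hs : √(N : ℝ) ^ 2 = N := sq_sqrt (Nat.cast_nonneg N)
  rify at this
  linear_combination this - hs

lemma isReducedSurd_succ (h : IsSqrtCF N a P Q) (hN : ¬ IsSquare N) (hm : 0 ≤ m) (hQ : 0 < Q m)
    (hP : (P m : ℝ) < √N) (hPQ : (Q m : ℝ) < P m + √N) :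
    IsReducedSurd N (P (m + 1)) (Q (m + 1)) := by
  have hQR : (0 : ℝ) < Q m := by exact_mod_cast hQ
  obtain ⟨hlo, hhi⟩ := h.P_succ_mem_Ioo hN hm hQ
  have ha : (1 : ℝ) ≤ a m := by
    have : (1 : ℤ) ≤ a m := by
      rw [h.a_eq m hm, Int.le_floor, le_div_iff₀ hQR]
      push_cast
      linarith
    exact_mod_cast this
  have hP' : (P (m + 1) : ℝ) = a m * Q m - P m := by exact_mod_cast h.P_succ m hm
  have hbig : (Q m : ℝ) < √N + P (m + 1) := by nlinarith
  have hprod := h.Q_succ_mul_eq_sqrt_sub_mul_sqrt_add hm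
  have hQ' : (0 : ℝ) < Q (m + 1) := by nlinarith
  refine ⟨by exact_mod_cast hQ', ?_, ?_, ?_⟩ <;> nlinarith

lemma isReducedSurd (h : IsSqrtCF N a P Q) (hN : ¬ IsSquare N) :
    ∀ m, 1 ≤ m → IsReducedSurd N (P m) (Q m) := by
  have h1 := one_lt_sqrt_of_not_isSquare hN
  refine Int.leInduction ?_ fun m hm ⟨hQ, hP, _, hPQ⟩ =>
    h.isReducedSurd_succ hN (by omega) hQ hP hPQ
  exact h.isReducedSurd_succ hN le_rfl (by simp [h.Q_zero])
    (by rw [h.P_zero]; push_cast; linarith) (by simpa [h.P_zero, h.Q_zero] using h1)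

lemma Q_pos (h : IsSqrtCF N a P Q) (hN : ¬ IsSquare N) (hm : 0 ≤ m) : 0 < Q m := by
  rcases hm.eq_or_lt with rfl | hm
  · simp [h.Q_zero]
  · exact (h.isReducedSurd hN m hm).1

local notation "ξ" => completeQuotient N P Q

lemma one_lt_completeQuotient (h : IsSqrtCF N a P Q) (hN : ¬ IsSquare N) (hm : 1 ≤ m) :
    1 < ξ m := by
  obtain ⟨hQ, -, -, hPQ⟩ := h.isReducedSurd hN m hm
  rw [completeQuotient, one_lt_div (by exact_mod_cast hQ)]
  exact hPQ

lemma completeQuotient_lt (h : IsSqrtCF N a P Q) (hN : ¬ IsSquare N) (hm : 1 ≤ m) :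
    ξ m < 2 * √N := by
  obtain ⟨hQ, hP, -, hPQ⟩ := h.isReducedSurd hN m hm
  have hQ1 : (1 : ℝ) ≤ Q m := by exact_mod_cast hQ
  rw [completeQuotient, div_lt_iff₀ (by linarith)]
  nlinarith

lemma completeQuotient_succ_mul (h : IsSqrtCF N a P Q) (hN : ¬ IsSquare N) (hm : 0 ≤ m) :
    ξ (m + 1) * (ξ m - a m) = 1 := by
  have hQ : (Q m : ℝ) ≠ 0 := by exact_mod_cast (h.Q_pos hN hm).ne'
  have hQ' : (Q (m + 1) : ℝ) ≠ 0 := by exact_mod_cast (h.Q_pos hN (by omega : 0 ≤ m + 1)).ne'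
  have hP' : (P (m + 1) : ℝ) = a m * Q m - P m := by exact_mod_cast h.P_succ m hm
  have hprod := h.Q_succ_mul_eq_sqrt_sub_mul_sqrt_add hm
  rw [completeQuotient, completeQuotient]
  field_simp
  linear_combination hP' * (√N + P (m + 1)) - hprod

lemma one_add_inv_lt_completeQuotient (h : IsSqrtCF N a P Q) (hN : ¬ IsSquare N) (hm : 1 ≤ m) :
    1 + (2 * √N)⁻¹ < ξ m := by
  have hrec := h.completeQuotient_succ_mul hN (by omega : 0 ≤ m)
  have hξ' := h.completeQuotient_lt hN (by omega : 1 ≤ m + 1)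
  have hpos : 0 < ξ (m + 1) := by linarith [h.one_lt_completeQuotient hN (by omega : 1 ≤ m + 1)]
  have ha : (1 : ℝ) ≤ a m := by
    have : (1 : ℤ) ≤ a m := by
      rw [h.a_eq m (by omega), Int.le_floor]
      exact_mod_cast (h.one_lt_completeQuotient hN hm).le
    exact_mod_cast this
  have hfrac : ξ m - a m = (ξ (m + 1))⁻¹ := eq_inv_of_mul_eq_one_right hrec
  have : (2 * √N)⁻¹ < (ξ (m + 1))⁻¹ := inv_strictAnti₀ hpos hξ'
  linarith

lemma completeQuotient_add_period (h : IsSqrtCF N a P Q) (hN : ¬ IsSquare N) {τ : ℕ}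
    (hper : ∀ n : ℤ, 1 ≤ n → a (n + τ) = a n) (hm : 1 ≤ m) : ξ (m + τ) = ξ m := by
  set c : ℝ := 1 + (2 * √N)⁻¹
  have hc : 1 < c := lt_add_of_pos_right 1 (by positivity [one_lt_sqrt_of_not_isSquare hN])
  have hstep : ∀ n : ℤ, 1 ≤ n →
      ξ (n + 1) - ξ (n + 1 + τ) = ξ (n + 1) * ξ (n + 1 + τ) * (ξ (n + τ) - ξ n) := by
    intro n hn
    have e := h.completeQuotient_succ_mul hN (by omega : 0 ≤ n)
    have e' := h.completeQuotient_succ_mul hN (by omega : 0 ≤ n + τ)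
    rw [hper n hn, add_right_comm] at e'
    linear_combination ξ (n + 1 + τ) * e - ξ (n + 1) * e'
  set d : ℕ → ℝ := fun t => ξ (m + t + τ) - ξ (m + t)
  have hgrow : ∀ t, c * |d t| ≤ |d (t + 1)| := by
    intro t
    have hn : 1 ≤ m + t := by omega
    have hξ := h.one_add_inv_lt_completeQuotient hN (by omega : 1 ≤ m + t + 1)
    have hξ' := h.one_lt_completeQuotient hN (by omega : 1 ≤ m + t + 1 + τ)
    have hd : d (t + 1) = -(ξ (m + t + 1) * ξ (m + t + 1 + τ) * d t) := by
      simp only [d, Nat.cast_add, Nat.cast_one, ← hstep _ hn]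
      ring_nf
    have hprod : c ≤ ξ (m + t + 1) * ξ (m + t + 1 + τ) := by nlinarith
    rw [hd, abs_neg, abs_mul, abs_of_pos (zero_lt_one.trans (hc.trans_le hprod))]
    exact mul_le_mul_of_nonneg_right hprod (abs_nonneg _)
  have hB : ∀ t, |d t| ≤ 2 * √N := by
    intro t
    have := h.one_lt_completeQuotient hN (by omega : 1 ≤ m + t)
    have := h.one_lt_completeQuotient hN (by omega : 1 ≤ m + t + τ)
    have := h.completeQuotient_lt hN (by omega : 1 ≤ m + t)
    have := h.completeQuotient_lt hN (by omega : 1 ≤ m + t + τ)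
    rw [abs_le]
    constructor <;> linarith
  simpa [d, sub_eq_zero] using eq_zero_of_mul_abs_le_abs_succ hc hgrow hB

lemma add_period (h : IsSqrtCF N a P Q) (hN : ¬ IsSquare N) {τ : ℕ}
    (hper : ∀ n : ℤ, 1 ≤ n → a (n + τ) = a n) (hm : 1 ≤ m) :
    P (m + τ) = P m ∧ Q (m + τ) = Q m :=
  (irrational_sqrt_natCast_iff.mpr hN).eq_of_add_div_eq_add_div
    (h.Q_pos hN (by omega)).ne' (h.Q_pos hN (by omega)).ne'
    (h.completeQuotient_add_period hN hper hm)

lemma Q_period_eq_one (h : IsSqrtCF N a P Q) (hN : ¬ IsSquare N) {τ : ℕ} (hτ : 0 < τ)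
    (hper : ∀ n : ℤ, 1 ≤ n → a (n + τ) = a n) : Q τ = 1 := by
  obtain ⟨hP, hQ⟩ := h.add_period hN hper le_rfl
  have e := h.Q_succ_mul τ (by positivity)
  have e₀ := h.Q_succ_mul 0 le_rfl
  rw [add_comm, hP, hQ] at e
  rw [zero_add, h.Q_zero, ← e] at e₀
  exact mul_left_cancel₀ (h.Q_pos hN zero_le_one).ne' e₀.symm

lemma P_period_eq_P_one (h : IsSqrtCF N a P Q) (hN : ¬ IsSquare N) {τ : ℕ} (hτ : 0 < τ)
    (hper : ∀ n : ℤ, 1 ≤ n → a (n + τ) = a n) : P τ = P 1 := by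
  obtain ⟨-, hP, hPQ, -⟩ := h.isReducedSurd hN τ (by omega)
  have h₁ := h.P_succ_mem_Ioo hN le_rfl (by simp [h.Q_zero])
  rw [h.Q_period_eq_one hN hτ hper, Int.cast_one] at hPQ
  rw [h.Q_zero, zero_add] at h₁
  exact Int.eq_of_dvd_sub_of_mem_Ioo (one_dvd _) ⟨by push_cast; linarith, hP⟩
    (by exact_mod_cast h₁)

lemma palindrome (h : IsSqrtCF N a P Q) (hN : ¬ IsSquare N) {τ : ℕ} (hτ : 0 < τ)
    (hper : ∀ n : ℤ, 1 ≤ n → a (n + τ) = a n) (j : ℕ) (hj : j < τ) :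
    Q ((τ : ℤ) - j) = Q j ∧ P ((τ : ℤ) - j) = P (j + 1) := by
  induction j with
  | zero =>
    simpa [h.Q_zero] using ⟨h.Q_period_eq_one hN hτ hper, h.P_period_eq_P_one hN hτ hper⟩
  | succ j ih =>
    obtain ⟨hQj, hPj⟩ := ih (by omega)
    set n : ℤ := τ - (j + 1)
    have hn : n + 1 = τ - j := by omega
    have hQ : Q n = Q (j + 1) := by
      have e := h.Q_succ_mul n (by omega)
      have e' := h.Q_succ_mul j (by omega)
      rw [hn, hQj, hPj] at e
      exact mul_left_cancel₀ (h.Q_pos hN (Nat.cast_nonneg j)).ne' (by linarith)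
    have hdvd : Q (j + 1) ∣ P n - P (j + 1 + 1) := by
      refine ⟨a n - a (j + 1), ?_⟩
      have e := h.P_succ n (by omega)
      have e' := h.P_succ (j + 1) (by omega)
      rw [hn, hPj, hQ] at e
      linear_combination e - e'
    obtain ⟨-, hP, hPQ, -⟩ := h.isReducedSurd hN n (by omega)
    have hmem := h.P_succ_mem_Ioo hN (by omega) (h.Q_pos hN (by omega : (0 : ℤ) ≤ j + 1))
    push_cast
    refine ⟨hQ, Int.eq_of_dvd_sub_of_mem_Ioo hdvd ⟨?_, hP⟩ hmem⟩
    rw [← hQ]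
    linarith

end IsSqrtCF

theorem stmt_9_general
    (N : ℕ) (hNsq : ¬ IsSquare N)
    (a P Q : ℤ → ℤ)
    (hP0 : P 0 = 0) (hQ0 : Q 0 = 1)
    (ha : ∀ m : ℤ, 0 ≤ m → a m = ⌊((P m : ℝ) + Real.sqrt N) / (Q m : ℝ)⌋)
    (hPrec : ∀ m : ℤ, 0 ≤ m → P (m + 1) = a m * Q m - P m)
    (hQrec : ∀ m : ℤ, 0 ≤ m → Q (m + 1) * Q m = (N : ℤ) - P (m + 1) ^ 2)
    (τ : ℕ)
    (hper : ∀ n : ℤ, 1 ≤ n → a (n + τ) = a n)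
    (hτodd : Odd τ)
    :
    (∃ x y : ℤ, (N : ℤ) = x ^ 2 + y ^ 2)
      ∧ (N : ℤ) = Q (((τ + 1) / 2 : ℕ)) ^ 2 + P (((τ + 1) / 2 : ℕ)) ^ 2 := by
  have h : IsSqrtCF N a P Q := ⟨hP0, hQ0, ha, hPrec, hQrec⟩
  obtain ⟨k, rfl⟩ := hτodd
  have hmid := (h.palindrome hNsq (by omega) hper k (by omega)).1
  have hsum : (N : ℤ) = Q (k + 1) ^ 2 + P (k + 1) ^ 2 := by
    rw [show ((2 * k + 1 : ℕ) : ℤ) - k = k + 1 by push_cast; ring] at hmid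
    linear_combination (hQrec k (by omega)).symm - Q (k + 1) * hmid
  have hk : (2 * k + 1 + 1) / 2 = k + 1 := by omega
  rw [hk]
  exact ⟨⟨_, _, hsum⟩, by exact_mod_cast hsum⟩

theorem stmt_9
    (N : ℕ) (hN : 0 < N) (hNsq : ¬ IsSquare N)
    (a P Q : ℤ → ℤ)
    (hP0 : P 0 = 0) (hQ0 : Q 0 = 1)
    (ha : ∀ m : ℤ, 0 ≤ m → a m = ⌊((P m : ℝ) + Real.sqrt N) / (Q m : ℝ)⌋)
    (hPrec : ∀ m : ℤ, 0 ≤ m → P (m + 1) = a m * Q m - P m)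
    (hQrec : ∀ m : ℤ, 0 ≤ m → Q (m + 1) * Q m = (N : ℤ) - P (m + 1) ^ 2)
    (τ : ℕ) (hτ : 0 < τ)
    (hper : ∀ n : ℤ, 1 ≤ n → a (n + τ) = a n)
    (hmin : ∀ τ' : ℕ, 0 < τ' → (∀ n : ℤ, 1 ≤ n → a (n + τ') = a n) → τ ≤ τ')
    (hτodd : Odd τ)
    :
    (∃ x y : ℤ, (N : ℤ) = x ^ 2 + y ^ 2)
      ∧ (N : ℤ) = Q (((τ + 1) / 2 : ℕ)) ^ 2 + P (((τ + 1) / 2 : ℕ)) ^ 2 :=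
  stmt_9_general N hNsq a P Q hP0 hQ0 ha hPrec hQrec τ hper hτodd
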